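/- arXiv:1901.04340 — 2 statements merged into one kernel-verified Lean document; each statement's English description precedes it below -/
import Mathlib

section
/- Sufficient optimality condition for the non-delayed state-linear problem (LP): Suppose (i) the functions f⁰, ∂f⁰/∂x, g⁰, A and g are continuous for all (t,x,u) ∈ [a,b] × ℝ^{n+m}; (ii) for each fixed t ∈ [a,b], the map x ↦ f⁰(t,x) is convex on ℝⁿ; (iii) u* is an admissible control with response x* such that for almost all t ∈ [a,b] the maximality condition H(t,x*(t),u*(t),η(t)) = max_{u∈Ω} H(t,x*(t),u,η(t)) holds, where H(t,x,u,η) = −[f⁰(t,x) + g⁰(t,u)] + η·[A(t)x + g(t,u)], and where η : [a,b] → ℝⁿ is a nontrivial solution of the adjoint system η̇(t) = ∂f⁰/∂x(t,x*(t)) − η(t)A(t) whose terminal value η(b) is an inward normal vector of Π at x*(b), i.e. ⟨η(b), y − x*(b)⟩ ≥ 0 for every y ∈ Π. Then u* is an optimal control: C[u*] ≤ C[u] for every admissible pair (x,u) of (LP) with x(b) ∈ Π. -/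
/-!
Put `φ(t) = η(t) ⬝ᵥ (x(t) - x*(t))`. The adjoint equation makes the `A`-terms cancel in `φ'`,
leaving `φ' = ∂f⁰/∂x(t,x*) ⬝ᵥ (x - x*) + η ⬝ᵥ (g(t,u) - g(t,u*))`; by convexity of `f⁰(t,·)` and
the maximality condition this is at most the difference of the running costs of `(x,u)` and
`(x*,u*)`. As `φ` is absolutely continuous, `φ(a) = 0` and `φ(b) ≥ 0` by transversality,
integrating gives `C[u] - C[u*] ≥ φ(b) - φ(a) ≥ 0`.
-/

open MeasureTheory Set Matrix

noncomputable section

/-- An admissible process for the non-delayed state-linear problem (LP):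
`x` is Lipschitz on `[a,b]` (i.e. `W^{1,∞}`), `u` is essentially bounded measurable with
values in `Ω`, the control system `ẋ(t) = A(t)x(t) + g(t,u(t))` holds for almost all
`t ∈ [a,b]`, and `x(a) = xa`. -/
def IsAdmissibleLP {n m : ℕ} (a b : ℝ) (A : ℝ → Matrix (Fin n) (Fin n) ℝ)
    (g : ℝ → (Fin m → ℝ) → (Fin n → ℝ)) (Ω : Set (Fin m → ℝ)) (xa : Fin n → ℝ)
    (x : ℝ → (Fin n → ℝ)) (u : ℝ → (Fin m → ℝ)) : Prop :=
  (∃ K, LipschitzOnWith K x (Icc a b)) ∧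
  MemLp u ⊤ (volume.restrict (Icc a b)) ∧
  (∀ t ∈ Icc a b, u t ∈ Ω) ∧
  x a = xa ∧
  (∀ᵐ t ∂(volume.restrict (Icc a b)),
    HasDerivAt x (A t *ᵥ x t + g t (u t)) t)

/-- Hamiltonian of (LP): `H(t,x,u,η) = −[f⁰(t,x) + g⁰(t,u)] + η·[A(t)x + g(t,u)]`. -/
def H_LP {n m : ℕ} (A : ℝ → Matrix (Fin n) (Fin n) ℝ)
    (f0 : ℝ → (Fin n → ℝ) → ℝ) (g0 : ℝ → (Fin m → ℝ) → ℝ)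
    (g : ℝ → (Fin m → ℝ) → (Fin n → ℝ))
    (t : ℝ) (x : Fin n → ℝ) (u : Fin m → ℝ) (η : Fin n → ℝ) : ℝ :=
  -(f0 t x + g0 t u) + η ⬝ᵥ (A t *ᵥ x + g t u)


theorem ConvexOn.apply_sub_le_sub_of_hasFDerivAt {E : Type*} [NormedAddCommGroup E]
    [NormedSpace ℝ E] {s : Set E} {f : E → ℝ} {f' : E →L[ℝ] ℝ} {x y : E}
    (hf : ConvexOn ℝ s f) (hx : x ∈ s) (hy : y ∈ s) (hf' : HasFDerivAt f f' x) :
    f' (y - x) ≤ f y - f x := by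
  let L : ℝ →ᵃ[ℝ] E := AffineMap.lineMap x y
  have hfL : HasDerivAt (f ∘ L) (f' (y - x)) 0 :=
    (by simpa [L] using hf' : HasFDerivAt f f' (L 0)).comp_hasDerivAt 0
      AffineMap.hasDerivAt_lineMap
  simpa [L, slope_def_field] using
    (hf.comp_affineMap L).le_slope_of_hasDerivAt (by simpa [L]) (by simpa [L]) one_pos hfL

theorem dotProduct_sub_le_of_hasFDerivAt_sum_smul_proj {n : ℕ} {f : (Fin n → ℝ) → ℝ}
    {p x y : Fin n → ℝ} (hf : ConvexOn ℝ univ f)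
    (hf' : HasFDerivAt f (∑ i : Fin n, p i • ContinuousLinearMap.proj (R := ℝ)
      (φ := fun _ : Fin n => ℝ) i) x) :
    p ⬝ᵥ (y - x) ≤ f y - f x := by
  simpa [_root_.sum_apply, dotProduct] using hf.apply_sub_le_sub_of_hasFDerivAt trivial trivial hf'

theorem HasDerivAt.dotProduct {ι : Type*} [Fintype ι] {f g : ℝ → ι → ℝ} {f' g' : ι → ℝ}
    {t : ℝ} (hf : HasDerivAt f f' t) (hg : HasDerivAt g g' t) :
    HasDerivAt (fun s => f s ⬝ᵥ g s) (f' ⬝ᵥ g t + f t ⬝ᵥ g') t := by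
  change HasDerivAt (fun s => ∑ i, f s i * g s i) (∑ i, f' i * g t i + ∑ i, f t i * g' i) t
  rw [← Finset.sum_add_distrib]
  exact HasDerivAt.fun_sum fun i _ => (hasDerivAt_pi.1 hf i).mul (hasDerivAt_pi.1 hg i)

theorem AbsolutelyContinuousOnInterval.fun_sum {F : Type*} [SeminormedAddCommGroup F]
    {ι : Type*} {s : Finset ι} {f : ι → ℝ → F} {a b : ℝ}
    (hf : ∀ i ∈ s, AbsolutelyContinuousOnInterval (f i) a b) :
    AbsolutelyContinuousOnInterval (fun t => ∑ i ∈ s, f i t) a b := by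
  classical
  induction s using Finset.induction_on with
  | empty =>
    simpa using (LipschitzWith.const (0 : F)).lipschitzOnWith.absolutelyContinuousOnInterval
  | insert i s hi ih =>
    simp_rw [Finset.sum_insert hi]
    exact (hf i (s.mem_insert_self i)).add (ih fun j hj => hf j (Finset.mem_insert_of_mem hj))

theorem LipschitzOnWith.absolutelyContinuousOnInterval_dotProduct {ι : Type*} [Fintype ι]
    {f g : ℝ → ι → ℝ} {K L : NNReal} {a b : ℝ} (hf : LipschitzOnWith K f (uIcc a b))
    (hg : LipschitzOnWith L g (uIcc a b)) :
    AbsolutelyContinuousOnInterval (fun t => f t ⬝ᵥ g t) a b :=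
  AbsolutelyContinuousOnInterval.fun_sum fun i _ =>
    ((LipschitzWith.eval i).comp_lipschitzOnWith hf).absolutelyContinuousOnInterval.fun_mul
      ((LipschitzWith.eval i).comp_lipschitzOnWith hg).absolutelyContinuousOnInterval

theorem exists_lipschitzOnWith_of_hasDerivAt_of_continuousOn {E : Type*} [NormedAddCommGroup E]
    [NormedSpace ℝ E] {f f' : ℝ → E} {a b : ℝ}
    (hf : ∀ t ∈ Icc a b, HasDerivAt f (f' t) t)
    (hf' : ContinuousOn f' (Icc a b)) : ∃ K, LipschitzOnWith K f (Icc a b) := by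
  obtain ⟨C, hC⟩ := isCompact_Icc.exists_bound_of_continuousOn hf'
  refine ⟨C.toNNReal, (convex_Icc a b).lipschitzOnWith_of_nnnorm_hasDerivWithin_le
    (fun t ht => (hf t ht).hasDerivWithinAt) fun t ht => ?_⟩
  rw [← norm_toNNReal]
  exact Real.toNNReal_mono (hC t ht)

theorem ContinuousOn.matrix_vecMul {X : Type*} [TopologicalSpace X] {m n : Type*} [Fintype m]
    {s : Set X} {v : X → m → ℝ} {M : X → Matrix m n ℝ} (hv : ContinuousOn v s)
    (hM : ContinuousOn M s) : ContinuousOn (fun x => v x ᵥ* M x) s :=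
  continuousOn_iff_continuous_domRestrict.2 <|
    (continuousOn_iff_continuous_domRestrict.1 hv).matrix_vecMul
      (continuousOn_iff_continuous_domRestrict.1 hM)

theorem integrableOn_Icc_comp_of_memLp_top {E F : Type*} [NormedAddCommGroup E] [ProperSpace E]
    [NormedAddCommGroup F] {a b : ℝ} (hab : a ≤ b) {Φ : ℝ × E → F}
    (hΦ : ContinuousOn Φ (Icc a b ×ˢ univ)) {u : ℝ → E}
    (hu : MemLp u ⊤ (volume.restrict (Icc a b))) :
    IntegrableOn (fun t => Φ (t, u t)) (Icc a b) := by
  obtain ⟨C, hC⟩ := eLpNormEssSup_lt_top_iff_isBoundedUnder.1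
    (by simpa [eLpNorm_exponent_top] using hu.2)
  obtain ⟨M, hM⟩ := (isCompact_Icc.prod (isCompact_closedBall (0 : E) C))
    |>.exists_bound_of_continuousOn (hΦ.mono (prod_mono_right (subset_univ _)))
  -- Clamping the time variable into `[a, b]` makes `Φ` continuous everywhere.
  have hΦc : Continuous fun p : ℝ × E => Φ (projIcc a b hab p.1, p.2) :=
    hΦ.comp_continuous
      ((continuous_subtype_val.comp (continuous_projIcc.comp continuous_fst)).prodMk
        continuous_snd) fun p => ⟨Subtype.mem _, mem_univ _⟩
  have hmeas : AEStronglyMeasurable (fun t => Φ (t, u t)) (volume.restrict (Icc a b)) := by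
    refine (hΦc.comp_aestronglyMeasurable (aestronglyMeasurable_id.prodMk hu.1)).congr ?_
    filter_upwards [ae_restrict_mem measurableSet_Icc] with t ht
    simp [projIcc_of_mem hab ht]
  refine Integrable.of_bound hmeas M ?_
  filter_upwards [hC, ae_restrict_mem measurableSet_Icc] with t htC ht
  exact hM _ ⟨ht, by simpa using NNReal.coe_le_coe.2 htC⟩

theorem IsAdmissibleLP.intervalIntegrable_cost {n m : ℕ} {a b : ℝ}
    {A : ℝ → Matrix (Fin n) (Fin n) ℝ}
    {g : ℝ → (Fin m → ℝ) → (Fin n → ℝ)} {Ω : Set (Fin m → ℝ)} {xa : Fin n → ℝ}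
    {x : ℝ → (Fin n → ℝ)} {u : ℝ → (Fin m → ℝ)} {f0 : ℝ → (Fin n → ℝ) → ℝ}
    {g0 : ℝ → (Fin m → ℝ) → ℝ} (h : IsAdmissibleLP a b A g Ω xa x u) (hab : a ≤ b)
    (hf0 : ContinuousOn (fun p : ℝ × (Fin n → ℝ) => f0 p.1 p.2) (Icc a b ×ˢ univ))
    (hg0 : ContinuousOn (fun p : ℝ × (Fin m → ℝ) => g0 p.1 p.2) (Icc a b ×ˢ univ)) :
    IntervalIntegrable (fun t => f0 t (x t) + g0 t (u t)) volume a b := by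
  obtain ⟨⟨K, hx⟩, hu, -⟩ := h
  refine (intervalIntegrable_iff_integrableOn_Icc_of_le hab).2 (.add ?_ ?_)
  · exact (hf0.comp (continuousOn_id.prodMk hx.continuousOn) fun t ht => ⟨ht, trivial⟩)
      |>.integrableOn_Icc
  · exact integrableOn_Icc_comp_of_memLp_top hab hg0 hu

theorem hasDerivAt_dotProduct_sub_of_adjoint {n : ℕ} {η x y : ℝ → Fin n → ℝ}
    {M : Matrix (Fin n) (Fin n) ℝ} {p v w : Fin n → ℝ} {t : ℝ}
    (hη : HasDerivAt η (p - η t ᵥ* M) t) (hx : HasDerivAt x (M *ᵥ x t + v) t)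
    (hy : HasDerivAt y (M *ᵥ y t + w) t) :
    HasDerivAt (fun s => η s ⬝ᵥ (x s - y s)) (p ⬝ᵥ (x t - y t) + η t ⬝ᵥ (v - w)) t := by
  convert hη.dotProduct (hx.fun_sub hy) using 1
  simp only [sub_dotProduct, dotProduct_sub, dotProduct_add, dotProduct_mulVec]
  ring

theorem dotProduct_sub_le_sub_of_H_LP_le {n m : ℕ} {A : ℝ → Matrix (Fin n) (Fin n) ℝ}
    {f0 : ℝ → (Fin n → ℝ) → ℝ} {g0 : ℝ → (Fin m → ℝ) → ℝ} {g : ℝ → (Fin m → ℝ) → (Fin n → ℝ)}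
    {t : ℝ} {x η : Fin n → ℝ} {u u' : Fin m → ℝ}
    (h : H_LP A f0 g0 g t x u η ≤ H_LP A f0 g0 g t x u' η) :
    η ⬝ᵥ (g t u - g t u') ≤ g0 t u - g0 t u' := by
  simp only [H_LP, dotProduct_add, dotProduct_sub] at h ⊢
  linarith

theorem lp_sufficient_optimality_general
    {n m : ℕ} {a b : ℝ} (hab : a < b)
    (Ω : Set (Fin m → ℝ)) (Pset : Set (Fin n → ℝ))
    (xa : Fin n → ℝ)
    (A : ℝ → Matrix (Fin n) (Fin n) ℝ)
    (f0 : ℝ → (Fin n → ℝ) → ℝ) (f0x : ℝ → (Fin n → ℝ) → (Fin n → ℝ))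
    (g0 : ℝ → (Fin m → ℝ) → ℝ) (g : ℝ → (Fin m → ℝ) → (Fin n → ℝ))
    -- `f0x t x` is the gradient `∂f⁰/∂x (t,x)` of `f⁰` with respect to `x`
    (hdiff : ∀ t ∈ Icc a b, ∀ x : Fin n → ℝ,
      HasFDerivAt (f0 t)
        (∑ i : Fin n, f0x t x i • ContinuousLinearMap.proj (R := ℝ) (φ := fun _ : Fin n => ℝ) i) x)
    -- (i) continuity of `f⁰`, `∂f⁰/∂x`, `g⁰`, `A` and `g` on `[a,b] × ℝ^{n+m}`
    (hf0cont : ContinuousOn (fun p : ℝ × (Fin n → ℝ) => f0 p.1 p.2) (Icc a b ×ˢ univ))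
    (hf0xcont : ContinuousOn (fun p : ℝ × (Fin n → ℝ) => f0x p.1 p.2) (Icc a b ×ˢ univ))
    (hg0cont : ContinuousOn (fun p : ℝ × (Fin m → ℝ) => g0 p.1 p.2) (Icc a b ×ˢ univ))
    (hAcont : ContinuousOn A (Icc a b))
    -- (ii) convexity of `x ↦ f⁰(t,x)` for each fixed `t ∈ [a,b]`
    (hconv : ∀ t ∈ Icc a b, ConvexOn ℝ univ (f0 t))
    -- (iii) `u*` is an admissible control with response `x*` satisfying the terminal constraint
    (xs : ℝ → (Fin n → ℝ)) (us : ℝ → (Fin m → ℝ))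
    (hadm : IsAdmissibleLP a b A g Ω xa xs us)
    -- `η` is a nontrivial solution of the adjoint system `η̇(t) = ∂f⁰/∂x(t,x*(t)) − η(t)A(t)`
    (η : ℝ → (Fin n → ℝ))
    (hadj : ∀ t ∈ Icc a b,
      HasDerivAt η (f0x t (xs t) - Matrix.vecMul (η t) (A t)) t)
    -- transversality: `η(b)` is an inward normal of `Π` at `x*(b)`
    (htransv : ∀ y ∈ Pset, 0 ≤ η b ⬝ᵥ (y - xs b))
    -- maximality condition for almost all `t ∈ [a,b]`
    (hmax : ∀ᵐ t ∂(volume.restrict (Icc a b)), ∀ u ∈ Ω,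
      H_LP A f0 g0 g t (xs t) u (η t) ≤ H_LP A f0 g0 g t (xs t) (us t) (η t)) :
    -- then `u*` is optimal: `C[u*] ≤ C[u]` for every admissible `(x,u)` with `x(b) ∈ Π`
    ∀ x u, IsAdmissibleLP a b A g Ω xa x u → x b ∈ Pset →
      (∫ t in a..b, (f0 t (xs t) + g0 t (us t))) ≤ ∫ t in a..b, (f0 t (x t) + g0 t (u t)) := by
  intro x u hadm' hxb
  have hcost := hadm'.intervalIntegrable_cost hab.le hf0cont hg0cont
  have hcost_s := hadm.intervalIntegrable_cost hab.le hf0cont hg0cont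
  obtain ⟨⟨Kx, hxlip⟩, -, huΩ, hxa, hx⟩ := hadm'
  obtain ⟨⟨Ks, hslip⟩, -, -, hsa, hs⟩ := hadm
  have hηcont : ContinuousOn η (Icc a b) := fun t ht =>
    (hadj t ht).continuousAt.continuousWithinAt
  obtain ⟨Kη, hηlip⟩ := exists_lipschitzOnWith_of_hasDerivAt_of_continuousOn hadj
    ((hf0xcont.comp (continuousOn_id.prodMk hslip.continuousOn) fun t ht => ⟨ht, trivial⟩).sub
      (hηcont.matrix_vecMul hAcont))
  set φ := fun t => η t ⬝ᵥ (x t - xs t)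
  have hφ : AbsolutelyContinuousOnInterval φ a b := by
    rw [← uIcc_of_le hab.le] at hηlip hxlip hslip
    exact hηlip.absolutelyContinuousOnInterval_dotProduct (hxlip.sub hslip)
  have hφab : 0 ≤ φ b - φ a := by simpa [φ, hxa, hsa] using htransv (x b) hxb
  have hderiv : deriv φ ≤ᵐ[volume.restrict (Icc a b)]
      fun t => (f0 t (x t) + g0 t (u t)) - (f0 t (xs t) + g0 t (us t)) := by
    filter_upwards [hx, hs, hmax, ae_restrict_mem measurableSet_Icc] with t hxt hst hmaxt ht
    rw [(hasDerivAt_dotProduct_sub_of_adjoint (hadj t ht) hxt hst).deriv]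
    have hf0 := dotProduct_sub_le_of_hasFDerivAt_sum_smul_proj (y := x t) (hconv t ht)
      (hdiff t ht (xs t))
    have hg0 := dotProduct_sub_le_sub_of_H_LP_le (hmaxt (u t) (huΩ t ht))
    linarith
  have hmono := intervalIntegral.integral_mono_ae_restrict hab.le hφ.intervalIntegrable_deriv
    (hcost.sub hcost_s) hderiv
  rw [hφ.integral_deriv_eq_sub, intervalIntegral.integral_sub hcost hcost_s] at hmono
  linarith

/-- Sufficient optimality condition for the non-delayed state-linear problem (LP). -/
theorem lp_sufficient_optimality
    {n m : ℕ} {a b : ℝ} (hab : a < b)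
    (Ω : Set (Fin m → ℝ)) (Pset : Set (Fin n → ℝ))
    (hPclosed : IsClosed Pset) (hPconvex : Convex ℝ Pset) (xa : Fin n → ℝ)
    (A : ℝ → Matrix (Fin n) (Fin n) ℝ)
    (f0 : ℝ → (Fin n → ℝ) → ℝ) (f0x : ℝ → (Fin n → ℝ) → (Fin n → ℝ))
    (g0 : ℝ → (Fin m → ℝ) → ℝ) (g : ℝ → (Fin m → ℝ) → (Fin n → ℝ))
    -- `f0x t x` is the gradient `∂f⁰/∂x (t,x)` of `f⁰` with respect to `x`
    (hdiff : ∀ t ∈ Icc a b, ∀ x : Fin n → ℝ,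
      HasFDerivAt (f0 t)
        (∑ i : Fin n, f0x t x i • ContinuousLinearMap.proj (R := ℝ) (φ := fun _ : Fin n => ℝ) i) x)
    -- (i) continuity of `f⁰`, `∂f⁰/∂x`, `g⁰`, `A` and `g` on `[a,b] × ℝ^{n+m}`
    (hf0cont : ContinuousOn (fun p : ℝ × (Fin n → ℝ) => f0 p.1 p.2) (Icc a b ×ˢ univ))
    (hf0xcont : ContinuousOn (fun p : ℝ × (Fin n → ℝ) => f0x p.1 p.2) (Icc a b ×ˢ univ))
    (hg0cont : ContinuousOn (fun p : ℝ × (Fin m → ℝ) => g0 p.1 p.2) (Icc a b ×ˢ univ))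
    (hAcont : ContinuousOn A (Icc a b))
    (hgcont : ContinuousOn (fun p : ℝ × (Fin m → ℝ) => g p.1 p.2) (Icc a b ×ˢ univ))
    -- (ii) convexity of `x ↦ f⁰(t,x)` for each fixed `t ∈ [a,b]`
    (hconv : ∀ t ∈ Icc a b, ConvexOn ℝ univ (f0 t))
    -- (iii) `u*` is an admissible control with response `x*` satisfying the terminal constraint
    (xs : ℝ → (Fin n → ℝ)) (us : ℝ → (Fin m → ℝ))
    (hadm : IsAdmissibleLP a b A g Ω xa xs us)
    (hterm : xs b ∈ Pset)
    -- `η` is a nontrivial solution of the adjoint system `η̇(t) = ∂f⁰/∂x(t,x*(t)) − η(t)A(t)`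
    (η : ℝ → (Fin n → ℝ))
    (hadj : ∀ t ∈ Icc a b,
      HasDerivAt η (f0x t (xs t) - Matrix.vecMul (η t) (A t)) t)
    (hnontrivial : ∃ t ∈ Icc a b, η t ≠ 0)
    -- transversality: `η(b)` is an inward normal of `Π` at `x*(b)`
    (htransv : ∀ y ∈ Pset, 0 ≤ η b ⬝ᵥ (y - xs b))
    -- maximality condition for almost all `t ∈ [a,b]`
    (hmax : ∀ᵐ t ∂(volume.restrict (Icc a b)), ∀ u ∈ Ω,
      H_LP A f0 g0 g t (xs t) u (η t) ≤ H_LP A f0 g0 g t (xs t) (us t) (η t)) :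
    -- then `u*` is optimal: `C[u*] ≤ C[u]` for every admissible `(x,u)` with `x(b) ∈ Π`
    ∀ x u, IsAdmissibleLP a b A g Ω xa x u → x b ∈ Pset →
      (∫ t in a..b, (f0 t (xs t) + g0 t (us t))) ≤ ∫ t in a..b, (f0 t (x t) + g0 t (u t)) :=
  lp_sufficient_optimality_general hab Ω Pset xa A f0 f0x g0 g hdiff hf0cont hf0xcont hg0cont hAcont
    hconv xs us hadm η hadj htransv hmax

end
end

section
/- State trajectory verification in the example: Define u : [−1,4] → ℝ by u(t) = 0 for t ∈ [−1,0), u(t) = (e^{3−t} − t e^{1−t})/20 for t ∈ [0,1), u(t) = (e^{3−t} − 1)/20 for t ∈ [1,3], u(t) = 0 for t ∈ (3,4], and define x : [−2,4] → ℝ by x(t) = 1 on [−2,0]; x(t) = −1 + 2e^t on (0,1]; x(t) = ((e² + 2e⁴ − 2e²t)e^{−t} − 8 + (17 − 2e²)e^t)/8 on (1,2]; x(t) = (2e^{4−t} + 4 + (−47e^{−2} + 17 − 2e² + 16e^{−2}t)e^t)/8 on (2,3]; x(t) = ((−e⁶ + e⁴t)e^{−t} + 4 + (−51e^{−2} + 24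 − 2e² + 17e^{−2}t − 2t)e^t)/8 on (3,4]. Then x is continuous on [−2,4] and satisfies the delayed differential equation ẋ(t) = x(t) + x(t−2) − 10 u(t−1) for all t in each of the open intervals (0,1), (1,2), (2,3) and (3,4). -/
/-! On each interval `(k - 1, k]` the trajectory has the form
`((a + b t) e^{-t} + c + (d + e t) e^t) / 8`, a family closed under differentiation. Continuity
reduces to matching consecutive pieces at `t = 0, 1, 2, 3`; on `(k - 1, k)` the delayed terms
`x (t - 2)` and `u (t - 1)` are given by the pieces on earlier intervals (method of steps), so the
delay equation becomes an identity between such expressions, checked after writing every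
exponential of an integer as a power of `exp 1`. -/

open Set Real

noncomputable section

/-- The candidate optimal control of the example. -/
def uex : ℝ → ℝ := fun t =>
  if t < 0 then 0
  else if t < 1 then (Real.exp (3 - t) - t * Real.exp (1 - t)) / 20
  else if t ≤ 3 then (Real.exp (3 - t) - 1) / 20
  else 0

/-- The candidate optimal state trajectory of the example. -/
def xex : ℝ → ℝ := fun t =>
  if t ≤ 0 then 1
  else if t ≤ 1 then -1 + 2 * Real.exp t
  else if t ≤ 2 then
    ((Real.exp 2 + 2 * Real.exp 4 - 2 * Real.exp 2 * t) * Real.exp (-t) - 8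
      + (17 - 2 * Real.exp 2) * Real.exp t) / 8
  else if t ≤ 3 then
    (2 * Real.exp (4 - t) + 4
      + (-47 * Real.exp (-2 : ℝ) + 17 - 2 * Real.exp 2 + 16 * Real.exp (-2 : ℝ) * t)
          * Real.exp t) / 8
  else
    ((-Real.exp 6 + Real.exp 4 * t) * Real.exp (-t) + 4
      + (-51 * Real.exp (-2 : ℝ) + 24 - 2 * Real.exp 2 + 17 * Real.exp (-2 : ℝ) * t - 2 * t)
          * Real.exp t) / 8

def expAffine (a b c d e t : ℝ) : ℝ :=
  (a + b * t) * exp (-t) + c + (d + e * t) * exp t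

theorem continuous_expAffine (a b c d e : ℝ) : Continuous (expAffine a b c d e) := by
  unfold expAffine
  fun_prop

theorem hasDerivAt_expAffine (a b c d e t : ℝ) :
    HasDerivAt (expAffine a b c d e) (expAffine (b - a) (-b) 0 (d + e) e t) t := by
  have hneg := ((hasDerivAt_id t).const_mul b |>.const_add a).mul (hasDerivAt_neg t).exp
  have hpos := ((hasDerivAt_id t).const_mul e |>.const_add d).mul (hasDerivAt_exp t)
  exact ((hneg.add_const c).add hpos).congr_deriv (by simp only [expAffine, id]; ring)

theorem exp_ofNat_eq_exp_one_pow (n : ℕ) [n.AtLeastTwo] :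
    exp (no_index (OfNat.ofNat n : ℝ)) = exp 1 ^ n := by
  rw [exp_one_pow]
  rfl

def xex₁ (t : ℝ) : ℝ := expAffine 0 0 (-8) 16 0 t / 8

def xex₂ (t : ℝ) : ℝ :=
  expAffine (exp 2 + 2 * exp 4) (-2 * exp 2) (-8) (17 - 2 * exp 2) 0 t / 8

def xex₃ (t : ℝ) : ℝ :=
  expAffine (2 * exp 4) 0 4 (-47 * exp (-2) + 17 - 2 * exp 2) (16 * exp (-2)) t / 8

def xex₄ (t : ℝ) : ℝ :=
  expAffine (-exp 6) (exp 4) 4 (-51 * exp (-2) + 24 - 2 * exp 2) (17 * exp (-2) - 2) t / 8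

theorem xex_eq_ite (t : ℝ) : xex t =
    if t ≤ 0 then 1 else if t ≤ 1 then xex₁ t else if t ≤ 2 then xex₂ t
    else if t ≤ 3 then xex₃ t else xex₄ t := by
  simp only [xex, xex₁, xex₂, xex₃, xex₄, expAffine, sub_eq_add_neg (4 : ℝ), exp_add]
  split_ifs <;> ring

theorem xex₁_zero : xex₁ 0 = 1 := by
  norm_num [xex₁, expAffine]

theorem xex₁_one : xex₁ 1 = xex₂ 1 := by
  simp only [xex₁, xex₂, expAffine, exp_neg, exp_ofNat_eq_exp_one_pow]
  field_simp
  ring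

theorem xex₂_two : xex₂ 2 = xex₃ 2 := by
  simp only [xex₂, xex₃, expAffine, exp_neg, exp_ofNat_eq_exp_one_pow]
  field_simp
  ring

theorem xex₃_three : xex₃ 3 = xex₄ 3 := by
  simp only [xex₃, xex₄, expAffine, exp_neg, exp_ofNat_eq_exp_one_pow]
  field_simp
  ring

theorem continuous_xex : Continuous xex := by
  have hpiece (a b c d e : ℝ) : Continuous fun t => expAffine a b c d e t / 8 :=
    (continuous_expAffine a b c d e).div_const 8
  refine Continuous.congr ?_ (fun t => (xex_eq_ite t).symm)
  refine .if_le continuous_const (.if_le (hpiece ..) (.if_le (hpiece ..)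
    (.if_le (hpiece ..) (hpiece ..) continuous_id continuous_const ?_)
    continuous_id continuous_const ?_) continuous_id continuous_const ?_)
    continuous_id continuous_const ?_ <;> rintro _ rfl <;>
    norm_num [xex₁_zero, xex₁_one, xex₂_two, xex₃_three]

theorem xex_of_nonpos {t : ℝ} (ht : t ≤ 0) : xex t = 1 := by
  simp [xex, ht]

theorem eqOn_xex₁ : EqOn xex xex₁ (Ioc 0 1) := by
  rintro t ⟨h0, h1⟩
  rw [xex_eq_ite]
  split_ifs <;> first | rfl | linarith

theorem eqOn_xex₂ : EqOn xex xex₂ (Ioc 1 2) := by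
  rintro t ⟨h1, h2⟩
  rw [xex_eq_ite]
  split_ifs <;> first | rfl | linarith

theorem eqOn_xex₃ : EqOn xex xex₃ (Ioc 2 3) := by
  rintro t ⟨h2, h3⟩
  rw [xex_eq_ite]
  split_ifs <;> first | rfl | linarith

theorem eqOn_xex₄ : EqOn xex xex₄ (Ioi 3) := by
  rintro t (h3 : 3 < t)
  rw [xex_eq_ite]
  split_ifs <;> first | rfl | linarith

theorem uex_of_neg {s : ℝ} (hs : s < 0) : uex s = 0 := by
  simp [uex, hs]

theorem uex_of_mem_Ico {s : ℝ} (hs : s ∈ Ico 0 1) :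
    uex s = (exp (3 - s) - s * exp (1 - s)) / 20 := by
  simp [uex, hs.2, not_lt.2 hs.1]

theorem uex_of_mem_Icc {s : ℝ} (hs : s ∈ Icc 1 3) : uex s = (exp (3 - s) - 1) / 20 := by
  simp [uex, hs.2, not_lt.2 hs.1, not_lt.2 (zero_le_one.trans hs.1)]

theorem hasDerivAt_xex₁ (t : ℝ) : HasDerivAt xex₁ (xex₁ t + 1) t := by
  refine ((hasDerivAt_expAffine ..).div_const 8).congr_deriv ?_
  simp only [xex₁, expAffine]
  ring

theorem hasDerivAt_xex₂ (t : ℝ) :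
    HasDerivAt xex₂
      (xex₂ t + 1 - 10 * ((exp (3 - (t - 1)) - (t - 1) * exp (1 - (t - 1))) / 20)) t := by
  refine ((hasDerivAt_expAffine ..).div_const 8).congr_deriv ?_
  simp only [xex₂, expAffine, exp_neg, exp_sub, exp_ofNat_eq_exp_one_pow]
  field_simp
  ring

theorem hasDerivAt_xex₃ (t : ℝ) :
    HasDerivAt xex₃ (xex₃ t + xex₁ (t - 2) - 10 * ((exp (3 - (t - 1)) - 1) / 20)) t := by
  refine ((hasDerivAt_expAffine ..).div_const 8).congr_deriv ?_
  simp only [xex₁, xex₃, expAffine, exp_neg, exp_sub, exp_ofNat_eq_exp_one_pow]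
  field_simp
  ring

theorem hasDerivAt_xex₄ (t : ℝ) :
    HasDerivAt xex₄ (xex₄ t + xex₂ (t - 2) - 10 * ((exp (3 - (t - 1)) - 1) / 20)) t := by
  refine ((hasDerivAt_expAffine ..).div_const 8).congr_deriv ?_
  simp only [xex₂, xex₄, expAffine, exp_neg, exp_sub, exp_ofNat_eq_exp_one_pow]
  field_simp
  ring

theorem hasDerivAt_xex_of_mem_Ioo_zero_one {t : ℝ} (ht : t ∈ Ioo 0 1) :
    HasDerivAt xex (xex t + xex (t - 2) - 10 * uex (t - 1)) t := by
  obtain ⟨h0, h1⟩ := ht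
  rw [eqOn_xex₁ ⟨h0, h1.le⟩, xex_of_nonpos (by linarith), uex_of_neg (by linarith), mul_zero,
    sub_zero]
  exact (hasDerivAt_xex₁ t).congr_of_eventuallyEq
    ((eqOn_xex₁.mono Ioo_subset_Ioc_self).eventuallyEq_of_mem (Ioo_mem_nhds h0 h1))

theorem hasDerivAt_xex_of_mem_Ioo_one_two {t : ℝ} (ht : t ∈ Ioo 1 2) :
    HasDerivAt xex (xex t + xex (t - 2) - 10 * uex (t - 1)) t := by
  obtain ⟨h1, h2⟩ := ht
  rw [eqOn_xex₂ ⟨h1, h2.le⟩, xex_of_nonpos (by linarith),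
    uex_of_mem_Ico ⟨by linarith, by linarith⟩]
  exact (hasDerivAt_xex₂ t).congr_of_eventuallyEq
    ((eqOn_xex₂.mono Ioo_subset_Ioc_self).eventuallyEq_of_mem (Ioo_mem_nhds h1 h2))

theorem hasDerivAt_xex_of_mem_Ioo_two_three {t : ℝ} (ht : t ∈ Ioo 2 3) :
    HasDerivAt xex (xex t + xex (t - 2) - 10 * uex (t - 1)) t := by
  obtain ⟨h2, h3⟩ := ht
  rw [eqOn_xex₃ ⟨h2, h3.le⟩, eqOn_xex₁ ⟨by linarith, by linarith⟩,
    uex_of_mem_Icc ⟨by linarith, by linarith⟩]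
  exact (hasDerivAt_xex₃ t).congr_of_eventuallyEq
    ((eqOn_xex₃.mono Ioo_subset_Ioc_self).eventuallyEq_of_mem (Ioo_mem_nhds h2 h3))

theorem hasDerivAt_xex_of_mem_Ioo_three_four {t : ℝ} (ht : t ∈ Ioo 3 4) :
    HasDerivAt xex (xex t + xex (t - 2) - 10 * uex (t - 1)) t := by
  obtain ⟨h3, h4⟩ := ht
  rw [eqOn_xex₄ h3, eqOn_xex₂ ⟨by linarith, by linarith⟩,
    uex_of_mem_Icc ⟨by linarith, by linarith⟩]
  exact (hasDerivAt_xex₄ t).congr_of_eventuallyEq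
    (eqOn_xex₄.eventuallyEq_of_mem (Ioi_mem_nhds h3))

/-- State trajectory verification in the example: `x` is continuous on `[−2,4]` and
satisfies the delayed differential equation `ẋ(t) = x(t) + x(t−2) − 10u(t−1)` on each of
the open intervals `(0,1)`, `(1,2)`, `(2,3)` and `(3,4)`. -/
theorem state_trajectory_example :
    ContinuousOn xex (Icc (-2 : ℝ) 4) ∧
    (∀ t : ℝ, t ∈ Ioo (0 : ℝ) 1 ∨ t ∈ Ioo (1 : ℝ) 2 ∨ t ∈ Ioo (2 : ℝ) 3 ∨ t ∈ Ioo (3 : ℝ) 4 →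
      HasDerivAt xex (xex t + xex (t - 2) - 10 * uex (t - 1)) t) := by
  refine ⟨continuous_xex.continuousOn, ?_⟩
  rintro t (ht | ht | ht | ht)
  exacts [hasDerivAt_xex_of_mem_Ioo_zero_one ht, hasDerivAt_xex_of_mem_Ioo_one_two ht,
    hasDerivAt_xex_of_mem_Ioo_two_three ht, hasDerivAt_xex_of_mem_Ioo_three_four ht]

end
end
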